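/- arXiv:math/0507190 — 5 statements merged into one kernel-verified Lean document; each statement's English description precedes it below -/
import Mathlib

section
/- The set G₃ = {(p,q) ∈ ℂ² : all roots of ζ³ + pζ + q lie in the open unit disc} is not convex. -/
open Complex

lemma absLtOne {z : ℂ} (h : Complex.normSq z < 1) : ‖z‖ < 1 := by
  rw [← Complex.sq_norm] at h; nlinarith [norm_nonneg z]

lemma cubic_factor (P Q : ℂ) : ∃ r1 r2 r3 : ℂ,
    ∀ z : ℂ, z ^ 3 + P * z + Q = (z - r1) * (z - r2) * (z - r3) := by
  obtain ⟨r1, h1⟩ := Complex.exists_root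
    (f := Polynomial.X ^ 3 + Polynomial.C P * Polynomial.X + Polynomial.C Q)
    (by
      have hd : (Polynomial.X ^ 3 + Polynomial.C P * Polynomial.X + Polynomial.C Q).degree = 3 := by
        compute_degree!
      rw [hd]; norm_num)
  have h1' : r1 ^ 3 + P * r1 + Q = 0 := by
    simpa [Polynomial.IsRoot] using h1
  obtain ⟨s, hs⟩ := IsAlgClosed.exists_pow_nat_eq (k := ℂ) (-3 * r1 ^ 2 - 4 * P) (n := 2) (by norm_num)
  refine ⟨r1, (-r1 + s) / 2, (-r1 - s) / 2, fun z => ?_⟩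
  linear_combination h1' + ((z - r1) / 4) * hs

/-- membership helper: if the cubic factors with roots of normSq < 1, the pair is in the set. -/
lemma mem_helper (p q a b c : ℂ)
    (h1 : a + b + c = 0) (h2 : a * b + a * c + b * c = p) (h3 : a * b * c = -q)
    (na : Complex.normSq a < 1) (nb : Complex.normSq b < 1) (nc : Complex.normSq c < 1) :
    ∀ ζ : ℂ, ζ ^ 3 + p * ζ + q = 0 → ‖ζ‖ < 1 := by
  intro ζ hζ
  have hfac : (ζ - a) * (ζ - b) * (ζ - c) = 0 := by
    linear_combination hζ - ζ ^ 2 * h1 + ζ * h2 - h3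
  rcases mul_eq_zero.1 hfac with h | h
  · rcases mul_eq_zero.1 h with h | h
    · rw [sub_eq_zero] at h; exact h ▸ absLtOne na
    · rw [sub_eq_zero] at h; exact h ▸ absLtOne nb
  · rw [sub_eq_zero] at h; exact h ▸ absLtOne nc

theorem stmt_6 :
    ¬ Convex ℝ {pq : ℂ × ℂ | ∀ ζ : ℂ, ζ ^ 3 + pq.1 * ζ + pq.2 = 0 → ‖ζ‖ < 1} := by
  intro hconv
  set a1 := (⟨71/500, 961/1000⟩ : ℂ)
  set b1 := (⟨-317/500, -773/1000⟩ : ℂ)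
  set c1 := (⟨123/250, -47/250⟩ : ℂ)
  set a2 := (⟨977/1000, 209/1000⟩ : ℂ)
  set b2 := (⟨-253/1000, 12/25⟩ : ℂ)
  set c2 := (⟨-181/250, -689/1000⟩ : ℂ)
  set p1 := (⟨89221/200000, -16689/31250⟩ : ℂ)
  set q1 := (⟨-9300519/50000000, 23824939/50000000⟩ : ℂ)
  set p2 := (⟨-99239/250000, -581589/1000000⟩ : ℂ)
  set q2 := (⟨-538271911/1000000000, 61815903/1000000000⟩ : ℂ)
  set P := (⟨49149/2000000, -1115637/2000000⟩ : ℂ) with hPdef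
  set Q := (⟨-724282291/2000000000, 538314683/2000000000⟩ : ℂ) with hQdef
  have hA : (p1, q1) ∈ {pq : ℂ × ℂ | ∀ ζ : ℂ, ζ ^ 3 + pq.1 * ζ + pq.2 = 0 → ‖ζ‖ < 1} := by
    exact mem_helper p1 q1 a1 b1 c1
      (by rw [Complex.ext_iff]; constructor <;> simp [a1, b1, c1] <;> norm_num)
      (by rw [Complex.ext_iff]; constructor <;>
        simp [a1, b1, c1, p1, Complex.mul_re, Complex.mul_im] <;> norm_num)
      (by rw [Complex.ext_iff]; constructor <;>
        simp [a1, b1, c1, q1, Complex.mul_re, Complex.mul_im] <;> norm_num)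
      (by simp [a1, Complex.normSq_apply]; norm_num)
      (by simp [b1, Complex.normSq_apply]; norm_num)
      (by simp [c1, Complex.normSq_apply]; norm_num)
  have hB : (p2, q2) ∈ {pq : ℂ × ℂ | ∀ ζ : ℂ, ζ ^ 3 + pq.1 * ζ + pq.2 = 0 → ‖ζ‖ < 1} := by
    exact mem_helper p2 q2 a2 b2 c2
      (by rw [Complex.ext_iff]; constructor <;> simp [a2, b2, c2] <;> norm_num)
      (by rw [Complex.ext_iff]; constructor <;>
        simp [a2, b2, c2, p2, Complex.mul_re, Complex.mul_im] <;> norm_num)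
      (by rw [Complex.ext_iff]; constructor <;>
        simp [a2, b2, c2, q2, Complex.mul_re, Complex.mul_im] <;> norm_num)
      (by simp [a2, Complex.normSq_apply]; norm_num)
      (by simp [b2, Complex.normSq_apply]; norm_num)
      (by simp [c2, Complex.normSq_apply]; norm_num)
  have hM := hconv hA hB (by norm_num : (0:ℝ) ≤ 1/2) (by norm_num : (0:ℝ) ≤ 1/2) (by norm_num)
  have hmid : (1/2 : ℝ) • ((p1, q1) : ℂ × ℂ) + (1/2 : ℝ) • ((p2, q2) : ℂ × ℂ) = (P, Q) := by
    rw [Prod.ext_iff]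
    constructor <;>
      · simp only [Prod.smul_fst, Prod.smul_snd, Prod.fst_add, Prod.snd_add, Complex.real_smul]
        rw [Complex.ext_iff]
        constructor <;>
          simp [p1, q1, p2, q2, P, Q, Complex.mul_re, Complex.mul_im, Complex.ofReal_re,
            Complex.ofReal_im] <;> norm_num
  rw [hmid] at hM
  -- hM : ∀ ζ, ζ^3 + P*ζ + Q = 0 → abs ζ < 1
  obtain ⟨r1, r2, r3, hfact⟩ := cubic_factor P Q
  have hr1 : ‖r1‖ < 1 := hM r1 (by rw [hfact r1]; ring)
  have hr2 : ‖r2‖ < 1 := hM r2 (by rw [hfact r2]; ring)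
  have hr3 : ‖r3‖ < 1 := hM r3 (by rw [hfact r3]; ring)
  set w := (⟨-341619661/500000000, -36761527/50000000⟩ : ℂ) with hwdef
  set s0 : ℝ := 10036831/10000000 with hs0def
  -- |w| ≥ s0
  have hnw : Complex.normSq w = 251844979518927821/250000000000000000 := by
    simp [w, Complex.normSq_apply]; norm_num
  have habsw : s0 ≤ ‖w‖ := by
    have h2 : ‖w‖ ^ 2 = Complex.normSq w := Complex.sq_norm w
    rw [hnw] at h2
    by_contra hlt
    push_neg at hlt
    have hs0sq : (10036831/10000000 : ℝ) * (10036831/10000000) ≤ 251844979518927821 / 250000000000000000 := by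
      norm_num
    rw [hs0def] at hlt
    nlinarith [mul_self_lt_mul_self (norm_nonneg w) hlt]
  have hs0 : (1 : ℝ) < s0 := by rw [hs0def]; norm_num
  have tri : ∀ r : ℂ, ‖r‖ < 1 → s0 - 1 < ‖w - r‖ := by
    intro r hr
    have h := norm_add_le (w - r) r
    rw [sub_add_cancel] at h
    linarith
  have l1 := tri r1 hr1
  have l2 := tri r2 hr2
  have l3 := tri r3 hr3
  have k1 : (0:ℝ) < s0 - 1 := by linarith
  have k2 : (s0-1)*(s0-1) < ‖w - r1‖ * ‖w - r2‖ :=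
    mul_lt_mul'' l1 l2 k1.le k1.le
  have k3 : (s0-1)*(s0-1)*(s0-1) <
      ‖w - r1‖ * ‖w - r2‖ * ‖w - r3‖ :=
    mul_lt_mul'' k2 l3 (by positivity) k1.le
  have hF : (w - r1) * (w - r2) * (w - r3) = w*w*w + P*w + Q := by
    rw [← hfact w]; ring
  have hprod : ‖w - r1‖ * ‖w - r2‖ * ‖w - r3‖
      = ‖w*w*w + P*w + Q‖ := by
    rw [← norm_mul, ← norm_mul, hF]
  have hnF : Complex.normSq (w*w*w + P*w + Q) = 21309304447620190563098748102408661/15625000000000000000000000000000000000000000000000000 := by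
    simp [hwdef, hPdef, hQdef, Complex.normSq_apply, Complex.mul_re, Complex.mul_im,
      Complex.add_re, Complex.add_im]
    norm_num
  have hFsq : ‖w*w*w + P*w + Q‖ ^ 2 = 21309304447620190563098748102408661/15625000000000000000000000000000000000000000000000000 := by
    rw [Complex.sq_norm, hnF]
  have habsF : ‖w*w*w + P*w + Q‖ < (s0-1)*(s0-1)*(s0-1) := by
    by_contra hge
    push_neg at hge
    have h6 : ((s0-1)*(s0-1)*(s0-1))^2 ≤ ‖w*w*w + P*w + Q‖ ^ 2 := by
      have hp : (0:ℝ) ≤ (s0-1)*(s0-1)*(s0-1) := by positivity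
      nlinarith
    rw [hFsq, hs0def] at h6
    norm_num at h6
  linarith [k3, hprod ▸ k3]
end

section
/- The set G₄ = {(p,q) ∈ ℂ² : all roots of ζ⁴ + pζ + q lie in the open unit disc} is not convex. -/
open Complex

lemma abs_aux (x y : ℝ) (h : x ^ 2 + y ^ 2 < 1) :
    ‖((x : ℂ) + (y : ℂ) * Complex.I)‖ < 1 := by
  have h2 := Complex.sq_norm ((x : ℂ) + (y : ℂ) * Complex.I)
  rw [Complex.normSq_add_mul_I] at h2
  nlinarith [norm_nonneg ((x : ℂ) + (y : ℂ) * Complex.I)]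

theorem stmt_7 :
    ¬ Convex ℝ {pq : ℂ × ℂ | ∀ ζ : ℂ, ζ ^ 4 + pq.1 * ζ + pq.2 = 0 → ‖ζ‖ < 1} := by
  intro hC
  have hmemA : (((((-2752912647447437505528127886755436289/4819905838878020739103512500000000000 : ℝ) : ℂ) + ((-1322261397511674186704931022813301223/4819905838878020739103512500000000000 : ℝ) : ℂ) * Complex.I), (((-16624774922607957089699190549632614978999193/38559246711024165912828100000000000000000000 : ℝ) : ℂ) + ((502128371220561459673662352540713582663789/2409952919439010369551756250000000000000000 : ℝ) : ℂ) * Complex.I)) : ℂ × ℂ) ∈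
      {pq : ℂ × ℂ | ∀ ζ : ℂ, ζ ^ 4 + pq.1 * ζ + pq.2 = 0 → ‖ζ‖ < 1} :=
    by
      simp only [Set.mem_setOf_eq]
      intro ζ h
      have key : (ζ - (((-12053/100000 : ℝ) : ℂ) + ((4259/6250 : ℝ) : ℂ) * Complex.I)) * (ζ - (((-579870754763/909814512500 : ℝ) : ℂ) + ((1962127382627/7278516100000 : ℝ) : ℂ) * Complex.I)) * (ζ - (((-1760667586907/7278516100000 : ℝ) : ℂ) + ((-882761477083/909814512500 : ℝ) : ℂ) * Complex.I)) * (ζ - (((454807073159/454907256250 : ℝ) : ℂ) + ((140092422853/7278516100000 : ℝ) : ℂ) * Complex.I)) = 0 := by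
        linear_combination (norm := (push_cast; ring1)) h - ((-15908399114069882719091135881329234501750297/38559246711024165912828100000000000000000000 : ℂ) + (821009571179734562757860950731445391226789/4819905838878020739103512500000000000000000 : ℂ) * Complex.I + (1033458062481531112270745067986036067007/301244114929876296193969531250000000000000 : ℂ) * Complex.I^2 + (-3177708303053987340911876453045629401/9639811677756041478207025000000000000 : ℂ) * ζ + (-1855311499436864591905410133953130959/9639811677756041478207025000000000000 : ℂ) * ζ * Complex.I + (107636006942286709/145570322000000000 : ℂ) * ζ^2) * Complex.I_sq
      rcases mul_eq_zero.mp key with h' | h4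
      · rcases mul_eq_zero.mp h' with h'' | h3
        · rcases mul_eq_zero.mp h'' with h1 | h2
          · rw [sub_eq_zero.mp h1]; apply abs_aux; norm_num
          · rw [sub_eq_zero.mp h2]; apply abs_aux; norm_num
        · rw [sub_eq_zero.mp h3]; apply abs_aux; norm_num
      · rw [sub_eq_zero.mp h4]; apply abs_aux; norm_num
  have hmemB : (((((-2752912647447437505528127886755436289/4819905838878020739103512500000000000 : ℝ) : ℂ) + ((1322261397511674186704931022813301223/4819905838878020739103512500000000000 : ℝ) : ℂ) * Complex.I), (((-16624774922607957089699190549632614978999193/38559246711024165912828100000000000000000000 : ℝ) : ℂ) + ((-502128371220561459673662352540713582663789/2409952919439010369551756250000000000000000 : ℝ) : ℂ) * Complex.I)) : ℂ × ℂ) ∈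
      {pq : ℂ × ℂ | ∀ ζ : ℂ, ζ ^ 4 + pq.1 * ζ + pq.2 = 0 → ‖ζ‖ < 1} :=
    by
      simp only [Set.mem_setOf_eq]
      intro ζ h
      have key : (ζ - (((-12053/100000 : ℝ) : ℂ) + ((-4259/6250 : ℝ) : ℂ) * Complex.I)) * (ζ - (((-579870754763/909814512500 : ℝ) : ℂ) + ((-1962127382627/7278516100000 : ℝ) : ℂ) * Complex.I)) * (ζ - (((-1760667586907/7278516100000 : ℝ) : ℂ) + ((882761477083/909814512500 : ℝ) : ℂ) * Complex.I)) * (ζ - (((454807073159/454907256250 : ℝ) : ℂ) + ((-140092422853/7278516100000 : ℝ) : ℂ) * Complex.I)) = 0 := by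
        linear_combination (norm := (push_cast; ring1)) h - ((-15908399114069882719091135881329234501750297/38559246711024165912828100000000000000000000 : ℂ) + (-821009571179734562757860950731445391226789/4819905838878020739103512500000000000000000 : ℂ) * Complex.I + (1033458062481531112270745067986036067007/301244114929876296193969531250000000000000 : ℂ) * Complex.I^2 + (-3177708303053987340911876453045629401/9639811677756041478207025000000000000 : ℂ) * ζ + (1855311499436864591905410133953130959/9639811677756041478207025000000000000 : ℂ) * ζ * Complex.I + (107636006942286709/145570322000000000 : ℂ) * ζ^2) * Complex.I_sq
      rcases mul_eq_zero.mp key with h' | h4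
      · rcases mul_eq_zero.mp h' with h'' | h3
        · rcases mul_eq_zero.mp h'' with h1 | h2
          · rw [sub_eq_zero.mp h1]; apply abs_aux; norm_num
          · rw [sub_eq_zero.mp h2]; apply abs_aux; norm_num
        · rw [sub_eq_zero.mp h3]; apply abs_aux; norm_num
      · rw [sub_eq_zero.mp h4]; apply abs_aux; norm_num
  have hmid := hC hmemA hmemB (by norm_num : (0:ℝ) ≤ 1/2) (by norm_num : (0:ℝ) ≤ 1/2)
    (by norm_num : (1/2 : ℝ) + 1/2 = 1)
  -- find a real root ≥ 1 of the midpoint polynomial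
  have hcont : ContinuousOn (fun x : ℝ => x ^ 4 + (-2752912647447437505528127886755436289/4819905838878020739103512500000000000 : ℝ) * x + (-16624774922607957089699190549632614978999193/38559246711024165912828100000000000000000000 : ℝ)) (Set.Icc 1 2) := by
    exact (((continuous_pow 4).add (continuous_const.mul continuous_id)).add continuous_const).continuousOn
  have h0mem : (0:ℝ) ∈ Set.Icc ((1:ℝ) ^ 4 + (-2752912647447437505528127886755436289/4819905838878020739103512500000000000 : ℝ) * 1 + (-16624774922607957089699190549632614978999193/38559246711024165912828100000000000000000000 : ℝ)) ((2:ℝ) ^ 4 + (-2752912647447437505528127886755436289/4819905838878020739103512500000000000 : ℝ) * 2 + (-16624774922607957089699190549632614978999193/38559246711024165912828100000000000000000000 : ℝ)) :=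
    ⟨by norm_num, by norm_num⟩
  obtain ⟨c, hc, hgc⟩ := intermediate_value_Icc (by norm_num : (1:ℝ) ≤ 2) hcont h0mem
  have hc1 : (1:ℝ) ≤ c := hc.1
  have hcast : (c : ℂ) ^ 4 + ((-2752912647447437505528127886755436289/4819905838878020739103512500000000000 : ℝ) : ℂ) * (c : ℂ) + ((-16624774922607957089699190549632614978999193/38559246711024165912828100000000000000000000 : ℝ) : ℂ) = 0 := by
    exact_mod_cast congrArg (fun t : ℝ => (t : ℂ)) hgc
  have hroot := hmid (c : ℂ) (by
    simp only [Prod.fst_add, Prod.snd_add, Prod.smul_fst, Prod.smul_snd, Complex.real_smul]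
    linear_combination (norm := (push_cast; ring1)) hcast)
  rw [Complex.norm_real, Real.norm_eq_abs, _root_.abs_of_nonneg (by linarith : (0:ℝ) ≤ c)] at hroot
  linarith
end

section
/- For p, q ∈ ℂ, all roots of f(ζ) = ζ³ + pζ + q lie in the open unit disc if and only if |q| < 1 and |p̄q(1−|q|²) − p²q̄| + |p|² − (1−|q|²)² < 0. -/
open Complex Metric ComplexConjugate Polynomial

noncomputable def AA (q : ℂ) : ℂ := 1 - q * conj q
noncomputable def fP (p q z : ℂ) : ℂ := z^3 + p*z + q
noncomputable def FP (p q z : ℂ) : ℂ := conj q * z^3 + conj p * z^2 + 1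

noncomputable def Complex.abs : AbsoluteValue ℂ ℝ where
  toFun := fun z => ‖z‖
  map_mul' := norm_mul
  nonneg' := norm_nonneg
  eq_zero' := fun _ => norm_eq_zero
  add_le' := norm_add_le

lemma Complex.norm_eq_abs (z : ℂ) : ‖z‖ = Complex.abs z := rfl
lemma Complex.sq_abs (z : ℂ) : Complex.abs z ^ 2 = Complex.normSq z := Complex.sq_norm z
lemma Complex.abs_conj (z : ℂ) : Complex.abs (conj z) = Complex.abs z := Complex.norm_conj z
lemma Complex.abs_ofReal (r : ℝ) : Complex.abs (r : ℂ) = |r| := Complex.norm_real r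

lemma AA_real (q : ℂ) : AA q = ((1 - Complex.abs q ^ 2 : ℝ) : ℂ) := by
  simp [AA, Complex.mul_conj, Complex.sq_abs]

lemma unit_mul {z : ℂ} (hz : Complex.abs z = 1) : z * conj z = 1 := by
  rw [Complex.mul_conj]
  norm_cast
  rw [← Complex.sq_abs, hz]; norm_num

lemma unit_inv {z : ℂ} (hz : Complex.abs z = 1) : conj z = z⁻¹ :=
  eq_inv_of_mul_eq_one_left (by rw [mul_comm]; exact unit_mul hz)

lemma bdry_f (p q z : ℂ) (hz : Complex.abs z = 1) :
    Complex.abs (fP p q z) = Complex.abs (FP p q z) := by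
  have hz0 : z ≠ 0 := by intro h; rw [h] at hz; simp at hz
  have key : FP p q z = z^3 * conj (fP p q z) := by
    simp only [fP, FP, map_add, map_mul, map_pow, unit_inv hz]
    field_simp
    ring
  rw [key, map_mul, map_pow, hz, Complex.abs_conj]
  simp

noncomputable def BB (p q : ℂ) : ℂ := AA q ^ 2 - p * conj p
noncomputable def dd (p q : ℂ) : ℂ := conj p * q * AA q - p^2 * conj q
noncomputable def f1 (p q z : ℂ) : ℂ := AA q * z^2 - conj p * q * z + p
noncomputable def F1 (p q z : ℂ) : ℂ := conj p * z^2 - p * conj q * z + AA q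
noncomputable def f2 (p q z : ℂ) : ℂ := BB p q * z - dd p q
noncomputable def F2 (p q z : ℂ) : ℂ := BB p q - conj (dd p q) * z

lemma BB_real (p q : ℂ) : BB p q = (((1 - Complex.abs q ^ 2)^2 - Complex.abs p ^2 : ℝ) : ℂ) := by
  simp [BB, AA_real, Complex.mul_conj, Complex.sq_abs]

lemma conj_AA (q : ℂ) : conj (AA q) = AA q := by
  rw [AA_real]; exact Complex.conj_ofReal _

lemma bdry_f1 (p q z : ℂ) (hz : Complex.abs z = 1) :
    Complex.abs (f1 p q z) = Complex.abs (F1 p q z) := by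
  have hz0 : z ≠ 0 := by intro h; rw [h] at hz; simp at hz
  have key : F1 p q z = z^2 * conj (f1 p q z) := by
    simp only [f1, F1, map_add, map_sub, map_mul, map_pow, conj_AA, unit_inv hz,
      Complex.conj_conj]
    field_simp
    ring
  rw [key, map_mul, map_pow, hz, Complex.abs_conj]
  simp

lemma bdry_f2 (p q z : ℂ) (hz : Complex.abs z = 1) :
    Complex.abs (f2 p q z) = Complex.abs (F2 p q z) := by
  have hz0 : z ≠ 0 := by intro h; rw [h] at hz; simp at hz
  have hBB : conj (BB p q) = BB p q := by
    rw [BB_real]; exact Complex.conj_ofReal _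
  have key : F2 p q z = z * conj (f2 p q z) := by
    simp only [f2, F2, map_sub, map_mul, hBB, Complex.conj_conj, unit_inv hz]
    field_simp
  rw [key, map_mul, hz, Complex.abs_conj]
  simp

lemma diff_fP (p q : ℂ) : Differentiable ℂ (fP p q) := by unfold fP; fun_prop
lemma diff_FP (p q : ℂ) : Differentiable ℂ (FP p q) := by unfold FP; fun_prop
lemma diff_f1 (p q : ℂ) : Differentiable ℂ (f1 p q) := by unfold f1; fun_prop
lemma diff_F1 (p q : ℂ) : Differentiable ℂ (F1 p q) := by unfold F1; fun_prop
lemma diff_f2 (p q : ℂ) : Differentiable ℂ (f2 p q) := by unfold f2; fun_prop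
lemma diff_F2 (p q : ℂ) : Differentiable ℂ (F2 p q) := by unfold F2; fun_prop

def ND (h : ℂ → ℂ) : Prop := ∀ z : ℂ, Complex.abs z ≤ 1 → h z ≠ 0

lemma maxmod {g G : ℂ → ℂ} (hg : Differentiable ℂ g) (hG : Differentiable ℂ G)
    (hGne : ND G)
    (hbd : ∀ z : ℂ, Complex.abs z = 1 → Complex.abs (g z) = Complex.abs (G z)) :
    ∀ z : ℂ, Complex.abs z ≤ 1 → Complex.abs (g z) ≤ Complex.abs (G z) := by
  intro z hz
  have h1 : ‖(fun w => g w / G w) z‖ ≤ 1 := by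
    apply Complex.norm_le_of_forall_mem_frontier_norm_le (U := ball (0:ℂ) 1)
      (f := fun w => g w / G w) isBounded_ball
    · constructor
      · intro w hw
        have : Complex.abs w ≤ 1 := le_of_lt (by simpa [mem_ball_zero_iff] using hw : ‖w‖ < 1)
        exact (((hg w).div (hG w) (hGne w this)).differentiableWithinAt)
      · intro w hw
        rw [closure_ball (0:ℂ) one_ne_zero, mem_closedBall_zero_iff] at hw
        exact (((hg w).continuousAt.div (hG w).continuousAt (hGne w hw)).continuousWithinAt)
    · intro w hw
      rw [frontier_ball (0:ℂ) one_ne_zero, mem_sphere_zero_iff_norm] at hw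
      have hw1 : Complex.abs w = 1 := hw
      have hGw : Complex.abs (G w) ≠ 0 :=
        Complex.abs.ne_zero (hGne w hw1.le)
      simp only [norm_div, Complex.norm_eq_abs, hbd w hw1, div_self hGw, le_refl]
    · rw [closure_ball (0:ℂ) one_ne_zero, mem_closedBall_zero_iff]
      exact hz
  have hGz := hGne z hz
  simp only [norm_div, Complex.norm_eq_abs] at h1
  rw [div_le_one (Complex.abs.pos hGz)] at h1
  simpa using h1

lemma step_P1_P2 (p q : ℂ) (hq : Complex.abs q < 1) (h : ND (FP p q)) : ND (F1 p q) := by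
  have hle := maxmod (diff_fP p q) (diff_FP p q) h (bdry_f p q)
  intro z hz h0
  have id1 : FP p q z = conj q * fP p q z := by
    have : F1 p q z = FP p q z - conj q * fP p q z := by
      simp only [F1, FP, fP, AA]; ring
    rw [this] at h0
    linear_combination h0
  have habs : Complex.abs (FP p q z) = Complex.abs q * Complex.abs (fP p q z) := by
    rw [id1, map_mul, Complex.abs_conj]
  have hpos : 0 < Complex.abs (FP p q z) := Complex.abs.pos (h z hz)
  nlinarith [hle z hz, Complex.abs.nonneg (fP p q z), Complex.abs.nonneg q]

lemma step_P2_P1 (p q : ℂ) (hq : Complex.abs q < 1) (h : ND (F1 p q)) : ND (FP p q) := by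
  have hle := maxmod (diff_f1 p q) (diff_F1 p q) h (bdry_f1 p q)
  intro z hz h0
  have id1 : F1 p q z = - (conj q * z * f1 p q z) := by
    have : AA q * FP p q z = F1 p q z + conj q * z * f1 p q z := by
      simp only [F1, FP, f1, AA]; ring
    rw [h0, mul_zero] at this
    linear_combination -this
  have habs : Complex.abs (F1 p q z) = Complex.abs q * Complex.abs z * Complex.abs (f1 p q z) := by
    rw [id1, map_neg_eq_map, map_mul, map_mul, Complex.abs_conj]
  have hpos : 0 < Complex.abs (F1 p q z) := Complex.abs.pos (h z hz)
  have c1 : Complex.abs q * Complex.abs z * Complex.abs (f1 p q z)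
      ≤ Complex.abs q * 1 * Complex.abs (F1 p q z) := by
    gcongr <;> first | exact hz | exact hle z hz | positivity
  have c2 : Complex.abs q * 1 * Complex.abs (F1 p q z) < 1 * 1 * Complex.abs (F1 p q z) := by
    gcongr <;> first | exact hq | exact hpos | positivity
  linarith

lemma abs_AA (q : ℂ) (hq : Complex.abs q < 1) :
    Complex.abs (AA q) = 1 - Complex.abs q ^ 2 := by
  rw [AA_real, Complex.abs_ofReal, abs_of_pos]
  nlinarith [Complex.abs.nonneg q]

lemma step_P2_P3 (p q : ℂ) (hq : Complex.abs q < 1)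
    (hp : Complex.abs p < 1 - Complex.abs q ^ 2) (h : ND (F1 p q)) : ND (F2 p q) := by
  have hle := maxmod (diff_f1 p q) (diff_F1 p q) h (bdry_f1 p q)
  intro z hz h0
  have id1 : AA q * F1 p q z = conj p * f1 p q z := by
    have : F2 p q z = AA q * F1 p q z - conj p * f1 p q z := by
      simp only [F2, F1, f1, BB, dd, AA, map_sub, map_mul, map_pow, map_one,
        Complex.conj_conj]
      ring
    rw [this] at h0
    linear_combination h0
  have habs : (1 - Complex.abs q ^ 2) * Complex.abs (F1 p q z)
      = Complex.abs p * Complex.abs (f1 p q z) := by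
    have := congrArg Complex.abs id1
    rwa [map_mul, map_mul, Complex.abs_conj, abs_AA q hq] at this
  have hpos : 0 < Complex.abs (F1 p q z) := Complex.abs.pos (h z hz)
  nlinarith [hle z hz, Complex.abs.nonneg p, Complex.abs.nonneg (f1 p q z)]

lemma step_P3_P2 (p q : ℂ) (hq : Complex.abs q < 1)
    (hp : Complex.abs p < 1 - Complex.abs q ^ 2) (h : ND (F2 p q)) : ND (F1 p q) := by
  have hle := maxmod (diff_f2 p q) (diff_F2 p q) h (bdry_f2 p q)
  intro z hz h0
  have id1 : AA q * F2 p q z = - (conj p * z * f2 p q z) := by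
    have : BB p q * F1 p q z = AA q * F2 p q z + conj p * z * f2 p q z := by
      simp only [F2, F1, f2, BB, dd, AA, map_sub, map_mul, map_pow, map_one,
        Complex.conj_conj]
      ring
    rw [h0, mul_zero] at this
    linear_combination -this
  have habs : (1 - Complex.abs q ^ 2) * Complex.abs (F2 p q z)
      = Complex.abs p * Complex.abs z * Complex.abs (f2 p q z) := by
    have := congrArg Complex.abs id1
    rwa [map_mul, map_neg_eq_map, map_mul, map_mul, Complex.abs_conj, abs_AA q hq] at this
  have hpos : 0 < Complex.abs (F2 p q z) := Complex.abs.pos (h z hz)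
  have c1 : Complex.abs p * Complex.abs z * Complex.abs (f2 p q z)
      ≤ Complex.abs p * 1 * Complex.abs (F2 p q z) := by
    gcongr <;> first | exact hz | exact hle z hz | positivity
  nlinarith [c1, hpos, hp]

lemma lin_back (p q : ℂ) (hd : Complex.abs (dd p q) < (1 - Complex.abs q ^ 2)^2 - Complex.abs p ^ 2) :
    ND (F2 p q) := by
  intro z hz h0
  have hB : Complex.abs (BB p q) = (1 - Complex.abs q ^ 2)^2 - Complex.abs p ^ 2 := by
    rw [BB_real, Complex.abs_ofReal, abs_of_pos]
    nlinarith [Complex.abs.nonneg (dd p q)]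
  have id1 : BB p q = conj (dd p q) * z := by
    simp only [F2] at h0
    linear_combination h0
  have := congrArg Complex.abs id1
  rw [map_mul, Complex.abs_conj, hB] at this
  nlinarith [Complex.abs.nonneg (dd p q), Complex.abs.nonneg z,
    mul_le_mul_of_nonneg_left hz (Complex.abs.nonneg (dd p q))]

lemma lin_forward (p q : ℂ) (hq : Complex.abs q < 1)
    (hp : Complex.abs p < 1 - Complex.abs q ^ 2) (h : ND (F2 p q)) :
    Complex.abs (dd p q) < (1 - Complex.abs q ^ 2)^2 - Complex.abs p ^ 2 := by
  by_contra hcon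
  push_neg at hcon
  have hBpos : (0:ℝ) < (1 - Complex.abs q ^ 2)^2 - Complex.abs p ^ 2 := by
    nlinarith [Complex.abs.nonneg p, Complex.abs.nonneg q]
  have hdne : dd p q ≠ 0 := by
    intro h0
    rw [h0] at hcon
    simp at hcon
    nlinarith
  have hcne : conj (dd p q) ≠ 0 := by simpa using hdne
  set z₀ := BB p q / conj (dd p q) with hz₀
  have hF2 : F2 p q z₀ = 0 := by
    simp only [F2, hz₀]
    field_simp
    ring
  have habs : Complex.abs z₀ ≤ 1 := by
    rw [hz₀, map_div₀, Complex.abs_conj, BB_real, Complex.abs_ofReal, abs_of_pos hBpos]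
    rw [div_le_one (Complex.abs.pos hdne)]
    exact hcon
  exact h z₀ habs hF2

lemma quad_root (a b c : ℂ) (ha : a ≠ 0) (hc : Complex.abs c ≤ Complex.abs a) :
    ∃ z : ℂ, Complex.abs z ≤ 1 ∧ a * z^2 + b * z + c = 0 := by
  set M : Polynomial ℂ := Polynomial.X ^ 2 + (Polynomial.C (b/a) * Polynomial.X + Polynomial.C (c/a)) with hM
  have hmonic : M.Monic := Polynomial.monic_X_pow_add (n := 2) (lt_of_le_of_lt Polynomial.degree_linear_le (by norm_num))
  have hdeg : M.natDegree = 2 := by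
    have h1 : M.degree = 2 := by
      rw [hM]
      rw [Polynomial.degree_add_eq_left_of_degree_lt]
      · exact Polynomial.degree_X_pow 2
      · rw [Polynomial.degree_X_pow]
        exact lt_of_le_of_lt Polynomial.degree_linear_le (by norm_num)
    rw [Polynomial.natDegree, h1]; rfl
  have hcard : M.roots.card = 2 := by
    rw [← hdeg]
    exact (Polynomial.splits_iff_card_roots.mp (IsAlgClosed.splits M))
  obtain ⟨x, y, hxy⟩ := Multiset.card_eq_two.mp hcard
  have hprod : M = (Polynomial.X - Polynomial.C x) * (Polynomial.X - Polynomial.C y) := by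
    have := (IsAlgClosed.splits M).eq_prod_roots_of_monic hmonic
    rw [hxy] at this
    simpa using this
  have heval0 : c / a = x * y := by
    have := congrArg (Polynomial.eval 0) hprod
    simp [hM] at this
    linear_combination this
  have hproda : Complex.abs x * Complex.abs y ≤ 1 := by
    rw [← map_mul, ← heval0, map_div₀]
    rw [div_le_one (Complex.abs.pos ha)]
    exact hc
  have hroot : ∀ r : ℂ, M.eval r = 0 → a * r^2 + b * r + c = 0 := by
    intro r hr
    simp [hM] at hr
    field_simp at hr
    linear_combination hr
  rcases le_or_gt (Complex.abs x) 1 with hx | hx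
  · refine ⟨x, hx, hroot x ?_⟩
    rw [hprod]; simp
  · refine ⟨y, ?_, hroot y ?_⟩
    · nlinarith [Complex.abs.nonneg y]
    · rw [hprod]; simp

lemma p_lt (p q : ℂ) (hq : Complex.abs q < 1) (h : ND (F1 p q)) :
    Complex.abs p < 1 - Complex.abs q ^ 2 := by
  have hApos : (0:ℝ) < 1 - Complex.abs q ^ 2 := by nlinarith [Complex.abs.nonneg q]
  have hle : Complex.abs p ≤ 1 - Complex.abs q ^ 2 := by
    have := maxmod (diff_f1 p q) (diff_F1 p q) h (bdry_f1 p q) 0 (by simp)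
    simpa [f1, F1, abs_AA q hq] using this
  rcases lt_or_eq_of_le hle with h' | h'
  · exact h'
  · exfalso
    have hpne : conj p ≠ 0 := by
      intro h0
      have hp0 : p = 0 := by simpa using congrArg (starRingEnd ℂ) h0
      rw [hp0] at h'
      simp at h'
      nlinarith
    obtain ⟨z, hz1, hz2⟩ := quad_root (conj p) (-(p * conj q)) (AA q) hpne
      (by rw [abs_AA q hq, Complex.abs_conj, ← h'])
    apply h z hz1
    simp only [F1]
    linear_combination hz2

lemma q_lt (p q : ℂ) (h : ∀ ζ : ℂ, ζ ^ 3 + p * ζ + q = 0 → Complex.abs ζ < 1) :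
    Complex.abs q < 1 := by
  set P : Polynomial ℂ := Polynomial.X ^ 3 + (Polynomial.C p * Polynomial.X + Polynomial.C q) with hP
  have hmonic : P.Monic := Polynomial.monic_X_pow_add (n := 3)
    (lt_of_le_of_lt Polynomial.degree_linear_le (by norm_num))
  have hdeg : P.natDegree = 3 := by
    have h1 : P.degree = 3 := by
      rw [hP, Polynomial.degree_add_eq_left_of_degree_lt]
      · exact Polynomial.degree_X_pow 3
      · rw [Polynomial.degree_X_pow]
        exact lt_of_le_of_lt Polynomial.degree_linear_le (by norm_num)
    rw [Polynomial.natDegree, h1]; rfl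
  have hcard : P.roots.card = 3 := by
    rw [← hdeg]
    exact (Polynomial.splits_iff_card_roots.mp (IsAlgClosed.splits P))
  obtain ⟨a, b, c, habc⟩ := Multiset.card_eq_three.mp hcard
  have hprod : P = (Polynomial.X - Polynomial.C a) * ((Polynomial.X - Polynomial.C b) * (Polynomial.X - Polynomial.C c)) := by
    have := (IsAlgClosed.splits P).eq_prod_roots_of_monic hmonic
    rw [habc] at this
    simpa [mul_assoc] using this
  have hroot : ∀ r : ℂ, P.eval r = 0 → Complex.abs r < 1 := by
    intro r hr
    apply h r
    simp [hP] at hr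
    linear_combination hr
  have ha : Complex.abs a < 1 := hroot a (by rw [hprod]; simp)
  have hb : Complex.abs b < 1 := hroot b (by rw [hprod]; simp)
  have hc : Complex.abs c < 1 := hroot c (by rw [hprod]; simp)
  have hq : q = -(a * b * c) := by
    have := congrArg (Polynomial.eval 0) hprod
    simp [hP] at this
    linear_combination this
  rw [hq]
  rw [map_neg_eq_map, map_mul, map_mul]
  have hab : Complex.abs a * Complex.abs b < 1 := by
    nlinarith [Complex.abs.nonneg a, Complex.abs.nonneg b]
  nlinarith [Complex.abs.nonneg c, mul_nonneg (Complex.abs.nonneg a) (Complex.abs.nonneg b)]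

lemma bridge_fwd (p q : ℂ) (h : ∀ ζ : ℂ, ζ ^ 3 + p * ζ + q = 0 → Complex.abs ζ < 1) :
    ND (FP p q) := by
  intro z hz h0
  have hz0 : z ≠ 0 := by
    intro h'
    rw [h'] at h0
    simp [FP] at h0
  have hc0 : conj z ≠ 0 := by simpa using hz0
  have key : (conj z)^3 * fP p q ((conj z)⁻¹) = conj (FP p q z) := by
    simp only [FP, fP, map_add, map_mul, map_pow, map_one, Complex.conj_conj]
    field_simp
    ring
  rw [h0, map_zero] at key
  have hroot : fP p q ((conj z)⁻¹) = 0 := by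
    rcases mul_eq_zero.mp key with h' | h'
    · exact absurd h' (pow_ne_zero 3 hc0)
    · exact h'
  have := h ((conj z)⁻¹) (by simpa [fP] using hroot)
  rw [map_inv₀, Complex.abs_conj] at this
  have h1 : (1:ℝ) ≤ (Complex.abs z)⁻¹ := (one_le_inv₀ (Complex.abs.pos hz0)).mpr hz
  linarith

lemma bridge_bwd (p q : ℂ) (h : ND (FP p q)) :
    ∀ ζ : ℂ, ζ ^ 3 + p * ζ + q = 0 → Complex.abs ζ < 1 := by
  intro ζ hζ
  by_contra hcon
  push_neg at hcon
  have hz0 : ζ ≠ 0 := by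
    intro h'
    rw [h'] at hcon
    simp at hcon
    linarith
  have hc0 : conj ζ ≠ 0 := by simpa using hz0
  have key : (conj ζ)^3 * FP p q ((conj ζ)⁻¹) = conj (fP p q ζ) := by
    simp only [FP, fP, map_add, map_mul, map_pow, Complex.conj_conj]
    field_simp
    ring
  have hf : fP p q ζ = 0 := by simpa [fP] using hζ
  rw [hf, map_zero] at key
  have hroot : FP p q ((conj ζ)⁻¹) = 0 := by
    rcases mul_eq_zero.mp key with h' | h'
    · exact absurd h' (pow_ne_zero 3 hc0)
    · exact h'
  apply h ((conj ζ)⁻¹) _ hroot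
  rw [map_inv₀, Complex.abs_conj]
  exact inv_le_one_of_one_le₀ hcon

lemma dd_eq (p q : ℂ) :
    (starRingEnd ℂ) p * q * (1 - (Complex.abs q : ℂ) ^ 2) - p ^ 2 * (starRingEnd ℂ) q
      = dd p q := by
  simp only [dd, AA_real]
  push_cast
  ring

theorem stmt_8 (p q : ℂ) :
    (∀ ζ : ℂ, ζ ^ 3 + p * ζ + q = 0 → ‖ζ‖ < 1) ↔
      ‖q‖ < 1 ∧
      ‖(starRingEnd ℂ) p * q * (1 - ((‖q‖ : ℝ) : ℂ) ^ 2)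
          - p ^ 2 * (starRingEnd ℂ) q‖
        + ‖p‖ ^ 2 - (1 - ‖q‖ ^ 2) ^ 2 < 0 := by
  simp only [Complex.norm_eq_abs]
  rw [dd_eq]
  constructor
  · intro h
    have hq : Complex.abs q < 1 := q_lt p q h
    have P1 : ND (FP p q) := bridge_fwd p q h
    have P2 : ND (F1 p q) := step_P1_P2 p q hq P1
    have hp : Complex.abs p < 1 - Complex.abs q ^ 2 := p_lt p q hq P2
    have P3 : ND (F2 p q) := step_P2_P3 p q hq hp P2
    have hd := lin_forward p q hq hp P3
    exact ⟨hq, by linarith⟩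
  · rintro ⟨hq, hineq⟩
    have hd : Complex.abs (dd p q) < (1 - Complex.abs q ^ 2)^2 - Complex.abs p ^ 2 := by
      linarith
    have hA : (0:ℝ) < 1 - Complex.abs q ^ 2 := by nlinarith [Complex.abs.nonneg q]
    have hp : Complex.abs p < 1 - Complex.abs q ^ 2 := by
      by_contra hc
      push_neg at hc
      nlinarith [mul_le_mul hc hc hA.le (Complex.abs.nonneg p), Complex.abs.nonneg (dd p q)]
    have P3 : ND (F2 p q) := lin_back p q hd
    have P2 : ND (F1 p q) := step_P3_P2 p q hq hp P3
    have P1 : ND (FP p q) := step_P2_P1 p q hq P2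
    exact bridge_bwd p q P1
end

section
/- (Cohn criterion, degree 2 case) For a, b, c ∈ ℂ with a ≠ 0, all roots of f(ζ) = aζ² + bζ + c lie in the open unit disc if and only if |a| > |c| and the root of f*(ζ) = (ā·f(ζ) − c·conj(f)(1/ζ̄))/ζ = (|a|² − |c|²)ζ + (āb − c·b̄) lies in the open unit disc. -/
open Complex

-- real inequality lemmas
lemma lem1 (s t : ℝ) (hs0 : 0 ≤ s) (ht0 : 0 ≤ t) (hs : s < 1) (ht : t < 1) :
    t * (1 - s^2) + s * (1 - t^2) < 1 - s^2 * t^2 := by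
  nlinarith [mul_pos (mul_pos (sub_pos.2 hs) (sub_pos.2 ht)) (sub_pos.2 (show s*t < 1 by nlinarith))]

lemma lem2 (s t : ℝ) (ht0 : 0 ≤ t) (hs : 1 ≤ s) (hst : s * t < 1) :
    1 - s^2 * t^2 ≤ s * (1 - t^2) - t * (s^2 - 1) := by
  have ht : t < 1 := by nlinarith
  nlinarith [mul_nonneg (mul_nonneg (sub_nonneg.2 hs) (sub_pos.2 ht).le) (sub_pos.2 hst).le]

lemma absE (z1 z2 : ℂ) :
    z2 * (z1 * (starRingEnd ℂ) z1 - 1) + z1 * (z2 * (starRingEnd ℂ) z2 - 1)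
      = z2 * (((‖z1‖ : ℂ))^2 - 1) + z1 * (((‖z2‖ : ℂ))^2 - 1) := by
  rw [Complex.mul_conj, Complex.mul_conj]
  norm_cast
  rw [Complex.sq_norm, Complex.sq_norm]

lemma core_fwd (z1 z2 : ℂ) (h1 : ‖z1‖ < 1) (h2 : ‖z2‖ < 1) :
    ‖z2 * (z1 * (starRingEnd ℂ) z1 - 1) + z1 * (z2 * (starRingEnd ℂ) z2 - 1)‖
      < 1 - (‖z1‖)^2 * (‖z2‖)^2 := by
  rw [absE]
  set p := ‖z1‖ with hp
  set q := ‖z2‖ with hq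
  have hp0 : 0 ≤ p := norm_nonneg _
  have hq0 : 0 ≤ q := norm_nonneg _
  calc ‖z2 * ((p:ℂ)^2 - 1) + z1 * ((q:ℂ)^2 - 1)‖
      ≤ ‖z2 * ((p:ℂ)^2 - 1)‖ + ‖z1 * ((q:ℂ)^2 - 1)‖ :=
        norm_add_le _ _
    _ = q * (1 - p^2) + p * (1 - q^2) := by
        rw [norm_mul, norm_mul]
        have e1 : ((p:ℂ)^2 - 1) = ((p^2 - 1 : ℝ) : ℂ) := by push_cast; ring
        have e2 : ((q:ℂ)^2 - 1) = ((q^2 - 1 : ℝ) : ℂ) := by push_cast; ring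
        rw [e1, e2, Complex.norm_real, Real.norm_eq_abs, Complex.norm_real, Real.norm_eq_abs,
          _root_.abs_of_nonpos (by nlinarith), _root_.abs_of_nonpos (by nlinarith)]
        ring
    _ < 1 - p^2 * q^2 := lem1 p q hp0 hq0 h1 h2

lemma core_bwd (z1 z2 : ℂ) (h1 : 1 ≤ ‖z1‖)
    (hst : ‖z1‖ * ‖z2‖ < 1) :
    1 - (‖z1‖)^2 * (‖z2‖)^2
      ≤ ‖z2 * (z1 * (starRingEnd ℂ) z1 - 1) + z1 * (z2 * (starRingEnd ℂ) z2 - 1)‖ := by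
  rw [absE]
  set p := ‖z1‖ with hp
  set q := ‖z2‖ with hq
  have hq0 : 0 ≤ q := norm_nonneg _
  have hq1 : q < 1 := by nlinarith
  have key : p * (1 - q^2) - q * (p^2 - 1)
      ≤ ‖z2 * ((p:ℂ)^2 - 1) + z1 * ((q:ℂ)^2 - 1)‖ := by
    have e1 : ((p:ℂ)^2 - 1) = ((p^2 - 1 : ℝ) : ℂ) := by push_cast; ring
    have e2 : ((q:ℂ)^2 - 1) = ((q^2 - 1 : ℝ) : ℂ) := by push_cast; ring
    have h3 : ‖z1 * ((q:ℂ)^2 - 1)‖ = p * (1 - q^2) := by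
      rw [norm_mul, e2, Complex.norm_real, Real.norm_eq_abs, _root_.abs_of_nonpos (by nlinarith)]; ring
    have h4 : ‖z2 * ((p:ℂ)^2 - 1)‖ = q * (p^2 - 1) := by
      rw [e1, norm_mul, Complex.norm_real, Real.norm_eq_abs, _root_.abs_of_nonneg (show (0:ℝ) ≤ p^2 - 1 by nlinarith)]
    have h5 := norm_sub_norm_le (z1 * ((q:ℂ)^2 - 1)) (-(z2 * ((p:ℂ)^2 - 1)))
    simp only [sub_neg_eq_add, norm_neg] at h5
    rw [h3, h4] at h5
    rw [show z1 * ((q:ℂ)^2 - 1) + z2 * ((p:ℂ)^2 - 1) = z2 * ((p:ℂ)^2 - 1) + z1 * ((q:ℂ)^2 - 1) from by ring] at h5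
    linarith
  calc 1 - p^2*q^2 ≤ p * (1 - q^2) - q * (p^2 - 1) := lem2 p q hq0 h1 hst
    _ ≤ _ := key

theorem stmt_9 (a b c : ℂ) (ha : a ≠ 0) :
    (∀ ζ : ℂ, a * ζ ^ 2 + b * ζ + c = 0 → ‖ζ‖ < 1) ↔
      ‖a‖ > ‖c‖ ∧
      ∀ ζ : ℂ, ((‖a‖ : ℂ) ^ 2 - (‖c‖ : ℂ) ^ 2) * ζ
          + ((starRingEnd ℂ) a * b - c * (starRingEnd ℂ) b) = 0 → ‖ζ‖ < 1 := by
  obtain ⟨d, hd⟩ := IsAlgClosed.exists_pow_nat_eq (b ^ 2 - 4 * a * c) (n := 2) (by norm_num)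
  have h2a : (2 * a) ≠ 0 := by simp [ha]
  set z1 : ℂ := (-b + d) / (2 * a) with hz1
  set z2 : ℂ := (-b - d) / (2 * a) with hz2
  have hb : b = -a * (z1 + z2) := by
    rw [hz1, hz2]; field_simp; ring
  have hc : c = a * z1 * z2 := by
    rw [hz1, hz2]; field_simp; linear_combination hd
  have hroots : ∀ ζ : ℂ, a * ζ ^ 2 + b * ζ + c = 0 ↔ (ζ = z1 ∨ ζ = z2) := by
    intro ζ
    have hfe : a * ζ ^ 2 + b * ζ + c = a * (ζ - z1) * (ζ - z2) := by rw [hb, hc]; ring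
    rw [hfe]
    constructor
    · intro h
      rcases mul_eq_zero.1 h with h' | h'
      · rcases mul_eq_zero.1 h' with h'' | h''
        · exact absurd h'' ha
        · exact Or.inl (sub_eq_zero.1 h'')
      · exact Or.inr (sub_eq_zero.1 h')
    · rintro (rfl | rfl) <;> ring
  have hLHS : (∀ ζ : ℂ, a * ζ ^ 2 + b * ζ + c = 0 → ‖ζ‖ < 1)
      ↔ (‖z1‖ < 1 ∧ ‖z2‖ < 1) := by
    constructor
    · intro h
      exact ⟨h z1 ((hroots z1).2 (Or.inl rfl)), h z2 ((hroots z2).2 (Or.inr rfl))⟩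
    · rintro ⟨h1, h2⟩ ζ hζ
      rcases (hroots ζ).1 hζ with rfl | rfl
      · exact h1
      · exact h2
  rw [hLHS]
  set B : ℂ := (starRingEnd ℂ) a * b - c * (starRingEnd ℂ) b with hB
  set E : ℂ := z2 * (z1 * (starRingEnd ℂ) z1 - 1) + z1 * (z2 * (starRingEnd ℂ) z2 - 1) with hE
  have key : B = (a * (starRingEnd ℂ) a) * E := by
    rw [hB, hE, hb, hc]
    simp only [map_neg, map_mul, map_add]
    ring
  have habs_key : ‖B‖ = (‖a‖) ^ 2 * ‖E‖ := by
    rw [key, norm_mul, norm_mul, Complex.norm_conj]; ring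
  have habsc : ‖c‖ = ‖a‖ * (‖z1‖ * ‖z2‖) := by
    rw [hc, norm_mul, norm_mul]; ring
  have hapos : 0 < ‖a‖ := norm_pos_iff.2 ha
  have hs0 : 0 ≤ ‖z1‖ := norm_nonneg _
  have ht0 : 0 ≤ ‖z2‖ := norm_nonneg _
  have hA : ∀ _ : ‖c‖ < ‖a‖,
      ((∀ ζ : ℂ, ((‖a‖ : ℂ) ^ 2 - (‖c‖ : ℂ) ^ 2) * ζ + B = 0 →
          ‖ζ‖ < 1) ↔
        ‖B‖ < (‖a‖) ^ 2 - (‖c‖) ^ 2) := by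
    intro hac
    have hr : (0 : ℝ) < (‖a‖) ^ 2 - (‖c‖) ^ 2 := by
      nlinarith [norm_nonneg c]
    have hAc : ((‖a‖ : ℂ) ^ 2 - (‖c‖ : ℂ) ^ 2)
        = (((‖a‖) ^ 2 - (‖c‖) ^ 2 : ℝ) : ℂ) := by push_cast; ring
    have hAne : ((‖a‖ : ℂ) ^ 2 - (‖c‖ : ℂ) ^ 2) ≠ 0 := by
      rw [hAc]
      exact_mod_cast ne_of_gt hr
    constructor
    · intro h
      have hroot : ((‖a‖ : ℂ) ^ 2 - (‖c‖ : ℂ) ^ 2) *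
          (-B / ((‖a‖ : ℂ) ^ 2 - (‖c‖ : ℂ) ^ 2)) + B = 0 := by
        field_simp
        ring
      have h' := h _ hroot
      rw [norm_div, norm_neg, hAc, Complex.norm_real, Real.norm_eq_abs, _root_.abs_of_pos hr,
        div_lt_one hr] at h'
      exact h'
    · intro h ζ hζ
      have heq : ((‖a‖ : ℂ) ^ 2 - (‖c‖ : ℂ) ^ 2) * ζ = -B := by
        linear_combination hζ
      have habs := congrArg (‖·‖) heq
      rw [norm_mul, norm_neg, hAc, Complex.norm_real, Real.norm_eq_abs, _root_.abs_of_pos hr] at habs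
      nlinarith [norm_nonneg ζ]
  constructor
  · rintro ⟨h1, h2⟩
    have hst1 : ‖z1‖ * ‖z2‖ < 1 := by
      nlinarith [mul_nonneg hs0 (sub_nonneg.2 h2.le)]
    have hac : ‖c‖ < ‖a‖ := by
      rw [habsc]; nlinarith [mul_lt_mul_of_pos_left hst1 hapos]
    refine ⟨hac, (hA hac).2 ?_⟩
    rw [habs_key]
    have hcore := core_fwd z1 z2 h1 h2
    rw [← hE] at hcore
    rw [habsc]
    nlinarith [mul_lt_mul_of_pos_left hcore (pow_pos hapos 2)]
  · rintro ⟨hac, h2⟩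
    have hBlt := (hA hac).1 h2
    have hst : ‖z1‖ * ‖z2‖ < 1 := by
      rw [habsc] at hac
      nlinarith
    by_contra hcon
    push_neg at hcon
    rw [habs_key, habsc] at hBlt
    rcases le_or_gt 1 (‖z1‖) with hge | hlt
    · have hcore := core_bwd z1 z2 hge hst
      rw [← hE] at hcore
      nlinarith [mul_le_mul_of_nonneg_left hcore (le_of_lt (pow_pos hapos 2))]
    · have hge2 : 1 ≤ ‖z2‖ := hcon hlt
      have hcore := core_bwd z2 z1 hge2 (by rw [mul_comm]; exact hst)
      rw [add_comm, ← hE] at hcore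
      nlinarith [mul_le_mul_of_nonneg_left hcore (le_of_lt (pow_pos hapos 2))]
end

section
/- If D ⊆ ℂⁿ is a balanced domain (λz ∈ D for all z ∈ D, |λ| ≤ 1) that can be written as an increasing union of open sets each biholomorphic to a convex domain, and D is bounded, then D is convex. -/
/-- Two open sets in ℂⁿ are biholomorphic: there are mutually inverse
holomorphic maps between them. -/
def Biholomorphic {n : ℕ} (U V : Set (Fin n → ℂ)) : Prop :=
  ∃ f g : (Fin n → ℂ) → (Fin n → ℂ),
    DifferentiableOn ℂ f U ∧ DifferentiableOn ℂ g V ∧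
    Set.MapsTo f U V ∧ Set.MapsTo g V U ∧
    (∀ z ∈ U, g (f z) = z) ∧ (∀ w ∈ V, f (g w) = w)

open Set Metric Bornology Complex

namespace Stmt11Aux

lemma rsmul {n : ℕ} (r : ℝ) (v : Fin n → ℂ) : r • v = (r : ℂ) • v := by
  rw [← Complex.coe_algebraMap, algebraMap_smul]

lemma compact_subset_union {X : Type*} [TopologicalSpace X] {K : Set X}
    (hK : IsCompact K) (Dk : ℕ → Set X) (hmono : Monotone Dk)
    (hDkopen : ∀ m, IsOpen (Dk m)) (hsub : K ⊆ ⋃ m, Dk m) : ∃ N, K ⊆ Dk N :=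
  hK.elim_directed_cover Dk hDkopen hsub hmono.directed_le

lemma step_open {n : ℕ} {W : ℂ → (Fin n → ℂ)} {ρ : ℝ} (hρ : 0 < ρ)
    (hWc : ContinuousOn W (closedBall 0 ρ)) {U : Set (Fin n → ℂ)} (hU : IsOpen U)
    {θ : ℝ} (hθ : ∀ lam ∈ closedBall (0:ℂ) ρ, θ • W lam ∈ U) :
    ∃ η > 0, ∀ θ' : ℝ, |θ' - θ| < η → ∀ lam ∈ closedBall (0:ℂ) ρ, θ' • W lam ∈ U := by
  have hKc : IsCompact ((fun lam => θ • W lam) '' closedBall (0:ℂ) ρ) :=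
    (isCompact_closedBall _ _).image_of_continuousOn (hWc.const_smul θ)
  have hKU : (fun lam => θ • W lam) '' closedBall (0:ℂ) ρ ⊆ U := by
    rintro _ ⟨lam, hlam, rfl⟩; exact hθ lam hlam
  obtain ⟨δ, hδ, hthick⟩ := hKc.exists_thickening_subset_open hU hKU
  obtain ⟨C, hC⟩ := (isCompact_closedBall (0:ℂ) ρ).exists_bound_of_continuousOn hWc
  have hC0 : 0 ≤ C := le_trans (norm_nonneg _) (hC 0 (mem_closedBall_self hρ.le))
  refine ⟨δ / (C + 1), by positivity, fun θ' hθ' lam hlam => ?_⟩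
  apply hthick
  rw [mem_thickening_iff]
  refine ⟨θ • W lam, mem_image_of_mem _ hlam, ?_⟩
  rw [dist_eq_norm, ← sub_smul]
  calc ‖(θ' - θ) • W lam‖ = |θ' - θ| * ‖W lam‖ := by rw [norm_smul, Real.norm_eq_abs]
    _ ≤ |θ' - θ| * C := mul_le_mul_of_nonneg_left (hC lam hlam) (abs_nonneg _)
    _ < δ := by
        have h1 : |θ' - θ| * C ≤ |θ' - θ| * (C + 1) := by nlinarith [abs_nonneg (θ' - θ)]
        have h2 : |θ' - θ| * (C + 1) < (δ / (C + 1)) * (C + 1) := by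
          apply mul_lt_mul_of_pos_right hθ'; positivity
        have h3 : (δ / (C + 1)) * (C + 1) = δ := by field_simp
        linarith

lemma two_points {n : ℕ} (hn : n ≠ 0) {U : Set (Fin n → ℂ)} (hU : IsOpen U)
    (hne : U.Nonempty) : ∃ x ∈ U, ∃ y ∈ U, x ≠ y := by
  obtain ⟨x, hx⟩ := hne
  obtain ⟨ε, hε, hball⟩ := Metric.isOpen_iff.mp hU x hx
  haveI : NeZero n := ⟨hn⟩
  set y : Fin n → ℂ := x + (fun _ => (ε/2 : ℂ)) with hy
  refine ⟨x, hx, y, hball ?_, ?_⟩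
  · rw [mem_ball, dist_eq_norm]
    have h1 : y - x = (fun _ => (ε/2 : ℂ)) := by simp [hy]
    rw [h1, pi_norm_const]
    have : ‖(ε/2 : ℂ)‖ = ε/2 := by
      rw [show (ε/2 : ℂ) = ((ε/2 : ℝ) : ℂ) by push_cast; ring]
      rw [Complex.norm_real, Real.norm_eq_abs, abs_of_pos (by positivity)]
    rw [this]; linarith
  · intro h
    have := congr_fun h ⟨0, Nat.pos_of_ne_zero hn⟩
    simp [hy] at this
    exact hε.ne' (by linarith [this])


lemma fill {n : ℕ} (hn : n ≠ 0) (D : Set (Fin n → ℂ))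
    (hopen : IsOpen D) (hbdd : IsBounded D)
    (hbal : ∀ z ∈ D, ∀ lam : ℂ, ‖lam‖ ≤ 1 → lam • z ∈ D)
    (Dk : ℕ → Set (Fin n → ℂ)) (hmono : Monotone Dk)
    (hDkopen : ∀ m, IsOpen (Dk m)) (hunion : ⋃ m, Dk m = D)
    (hbiho : ∀ m, ∃ G, IsOpen G ∧ Convex ℝ G ∧ Biholomorphic (Dk m) G)
    {W : ℂ → Fin n → ℂ} {R ρ : ℝ} (hρ1 : 1 < ρ) (hρR : ρ < R)
    (hW : DifferentiableOn ℂ W (ball 0 R))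
    (h0 : (0 : Fin n → ℂ) ∈ D)
    (hbound : ∀ θ : ℝ, θ ∈ Icc (0:ℝ) 1 → ∀ lam : ℂ, ‖lam‖ = ρ → θ • W lam ∈ D) :
    W 0 ∈ D := by
  have hρ0 : 0 < ρ := lt_trans one_pos hρ1
  have hsub : closedBall (0:ℂ) ρ ⊆ ball (0:ℂ) R := closedBall_subset_ball hρR
  have hWc : ContinuousOn W (closedBall 0 ρ) := (hW.continuousOn).mono hsub
  set T : Set ℝ := {θ | θ ∈ Icc (0:ℝ) 1 ∧ ∀ lam ∈ closedBall (0:ℂ) ρ, θ • W lam ∈ D} with hTdef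
  have h0T : (0:ℝ) ∈ T := ⟨⟨le_refl 0, zero_le_one⟩, fun lam _ => by simpa using h0⟩
  have hdown : ∀ θ ∈ T, ∀ θ' : ℝ, 0 ≤ θ' → θ' ≤ θ → θ' ∈ T := by
    intro θ hθ θ' h0' h1'
    refine ⟨⟨h0', le_trans h1' hθ.1.2⟩, fun lam hlam => ?_⟩
    rcases eq_or_lt_of_le (le_trans h0' h1') with h | hpos
    · have : θ' = 0 := le_antisymm (h ▸ h1') h0'
      simpa [this] using h0
    · have hkey : θ' • W lam = ((θ' / θ : ℝ) : ℂ) • (θ • W lam) := by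
        rw [← rsmul, smul_smul, div_mul_cancel₀ _ (ne_of_gt hpos)]
      rw [hkey]
      apply hbal _ (hθ.2 lam hlam)
      rw [Complex.norm_real, Real.norm_eq_abs, _root_.abs_of_nonneg (div_nonneg h0' hpos.le)]
      exact div_le_one_of_le₀ h1' hpos.le
  -- the key step
  have key : ∀ θs : ℝ, θs ∈ Icc (0:ℝ) 1 → 0 < θs →
      (∀ θ : ℝ, 0 ≤ θ → θ < θs → θ ∈ T) → θs ∈ T := by
    intro θs hθsI hθspos hlt
    have hθ₀T : θs/2 ∈ T := hlt _ (by positivity) (by linarith)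
    set θ₀ := θs/2 with hθ₀def
    have hθ₀pos : 0 < θ₀ := by positivity
    -- boundary tube L
    set L : Set (Fin n → ℂ) :=
      (fun q : ℝ × ℂ => q.1 • W q.2) '' (Icc (0:ℝ) 1 ×ˢ sphere (0:ℂ) ρ) with hLdef
    have hcontL : ContinuousOn (fun q : ℝ × ℂ => q.1 • W q.2) (Icc (0:ℝ) 1 ×ˢ sphere (0:ℂ) ρ) := by
      apply ContinuousOn.smul continuous_fst.continuousOn
      exact hWc.comp continuous_snd.continuousOn
        (fun q hq => sphere_subset_closedBall hq.2)
    have hLc : IsCompact L :=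
      (isCompact_Icc.prod (isCompact_sphere _ _)).image_of_continuousOn hcontL
    have hLD : L ⊆ D := by
      rintro _ ⟨⟨θ, lam⟩, ⟨hθI, hlam⟩, rfl⟩
      exact hbound θ hθI lam (by simpa [mem_sphere_iff_norm] using hlam)
    have hLne : L.Nonempty := by
      refine ⟨_, mem_image_of_mem _ (show ((0:ℝ), (ρ:ℂ)) ∈ _ from ?_)⟩
      refine ⟨⟨le_refl 0, zero_le_one⟩, ?_⟩
      simp [mem_sphere_iff_norm, abs_of_pos hρ0]
    -- starting disc K₀
    set K₀ : Set (Fin n → ℂ) := (fun lam : ℂ => θ₀ • W lam) '' closedBall (0:ℂ) ρ with hK₀def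
    have hK₀c : IsCompact K₀ := (isCompact_closedBall _ _).image_of_continuousOn (hWc.const_smul θ₀)
    have hK₀D : K₀ ⊆ D := by
      rintro _ ⟨lam, hlam, rfl⟩; exact hθ₀T.2 lam hlam
    obtain ⟨M, hM⟩ := compact_subset_union (hLc.union hK₀c) Dk hmono hDkopen
      (by rw [hunion]; exact union_subset hLD hK₀D)
    have hLM : L ⊆ Dk M := subset_union_left.trans hM
    have hK₀M : K₀ ⊆ Dk M := subset_union_right.trans hM
    have hDkD : Dk M ⊆ D := by rw [← hunion]; exact subset_iUnion Dk M
    obtain ⟨G, hGopen, hGconv, f, g, hf, hg, hfm, hgm, hgf, hfg⟩ := hbiho M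
    obtain ⟨x₀, hx₀L⟩ := hLne
    have hGne : G.Nonempty := ⟨f x₀, hfm (hLM hx₀L)⟩
    -- G has nonempty complement
    have hGcne : Gᶜ.Nonempty := by
      by_contra hcon
      rw [not_nonempty_iff_eq_empty, compl_empty_iff] at hcon
      have hgdiff : Differentiable ℂ g := by
        rw [hcon] at hg; exact differentiableOn_univ.mp hg
      have hrange : IsBounded (range g) := hbdd.subset (by
        rintro _ ⟨p, rfl⟩
        exact hDkD (hgm (by rw [hcon]; trivial)))
      obtain ⟨x, hx, y, hy, hxy⟩ := two_points hn (hDkopen M) ⟨x₀, hLM hx₀L⟩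
      exact hxy (by
        rw [← hgf x hx, ← hgf y hy, hgdiff.apply_eq_apply_of_bounded hrange (f x) (f y)])
    -- image of tube, depth and radius
    set fL : Set (Fin n → ℂ) := f '' L with hfLdef
    have hfLc : IsCompact fL := hLc.image_of_continuousOn (hf.continuousOn.mono hLM)
    have hfLG : fL ⊆ G := by rintro _ ⟨q, hq, rfl⟩; exact hfm (hLM hq)
    have hfLne : fL.Nonempty := ⟨f x₀, mem_image_of_mem f hx₀L⟩
    obtain ⟨qb, hqbmem, hqbmin'⟩ := hfLc.exists_isMinOn hfLne
      ((continuous_infDist_pt (Gᶜ)).continuousOn)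
    have hqbmin : ∀ q ∈ fL, infDist qb Gᶜ ≤ infDist q Gᶜ := fun q hq => isMinOn_iff.mp hqbmin' q hq
    set ε₀ := infDist qb Gᶜ with hε₀def
    have hε₀ : 0 < ε₀ := by
      rw [hε₀def]
      exact ((hGopen.isClosed_compl.notMem_iff_infDist_pos hGcne).mp (by
        simpa using hfLG hqbmem))
    have hfLdist : ∀ q ∈ fL, ∀ y ∈ Gᶜ, ε₀ ≤ dist q y := fun q hq y hy =>
      le_trans (hqbmin q hq) (infDist_le_dist_of_mem hy)
    obtain ⟨C₁, hC₁⟩ := hfLc.isBounded.subset_closedBall 0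
    -- the trap
    set P : Set (Fin n → ℂ) :=
      closedBall 0 C₁ ∩ {q | ∀ y ∈ Gᶜ, ε₀ ≤ dist q y} with hPdef
    have hPG : P ⊆ G := by
      intro q hq
      by_contra hqG
      have := hq.2 q hqG
      simp only [dist_self] at this
      linarith
    have hPcpt : IsCompact P := (isCompact_closedBall _ _).inter_right
      (by
        have : {q : Fin n → ℂ | ∀ y ∈ Gᶜ, ε₀ ≤ dist q y} = ⋂ y ∈ Gᶜ, {q | ε₀ ≤ dist q y} := by
          ext q; simp
        rw [this]
        exact isClosed_biInter fun y hy =>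
          isClosed_le continuous_const (continuous_id.dist continuous_const))
    set Q : Set (Fin n → ℂ) := g '' P with hQdef
    have hQc : IsCompact Q := hPcpt.image_of_continuousOn (hg.continuousOn.mono hPG)
    have hQM : Q ⊆ Dk M := by rintro _ ⟨p, hp, rfl⟩; exact hgm (hPG hp)
    -- inner continuation set
    set T' : Set ℝ :=
      {θ : ℝ | θ₀ ≤ θ ∧ θ ≤ θs ∧ ∀ lam ∈ closedBall (0:ℂ) ρ, θ • W lam ∈ Dk M} with hT'def
    have hθ₀T' : θ₀ ∈ T' :=
      ⟨le_refl _, by linarith, fun lam hlam => hK₀M (mem_image_of_mem _ hlam)⟩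
    have hIcc : ∀ θ ∈ T', θ ∈ Icc (0:ℝ) 1 := fun θ h =>
      ⟨le_trans hθ₀pos.le h.1, le_trans h.2.1 hθsI.2⟩
    -- the deep estimate: discs stay in the trap
    have deep : ∀ θ ∈ T', ∀ lam ∈ closedBall (0:ℂ) ρ, f (θ • W lam) ∈ P := by
      intro θ hθ
      have hFdiff : DifferentiableOn ℂ (fun lam => f (θ • W lam)) (closedBall 0 ρ) :=
        DifferentiableOn.comp hf ((hW.const_smul θ).mono hsub) (fun lam hlam => hθ.2.2 lam hlam)
      have hFdc : DiffContOnCl ℂ (fun lam => f (θ • W lam)) (ball 0 ρ) :=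
        DifferentiableOn.diffContOnCl (by rwa [closure_ball _ hρ0.ne'])
      have hFsphere : ∀ lam ∈ sphere (0:ℂ) ρ, f (θ • W lam) ∈ fL := fun lam hlam =>
        mem_image_of_mem f ⟨(θ, lam), ⟨hIcc θ hθ, hlam⟩, rfl⟩
      -- (a) norm bound
      have ha : ∀ lam ∈ closedBall (0:ℂ) ρ, ‖f (θ • W lam)‖ ≤ C₁ := by
        intro lam hlam
        apply Complex.norm_le_of_forall_mem_frontier_norm_le isBounded_ball hFdc
        · intro w hw
          rw [frontier_ball _ hρ0.ne'] at hw
          exact mem_closedBall_zero_iff.mp (hC₁ (hFsphere w hw))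
        · rwa [closure_ball _ hρ0.ne']
      -- (b) depth bound
      have hb : ∀ lam ∈ closedBall (0:ℂ) ρ, ∀ y ∈ Gᶜ, ε₀ ≤ dist (f (θ • W lam)) y := by
        intro lam hlam y hy
        obtain ⟨l, hl⟩ := geometric_hahn_banach_open_point hGconv hGopen hy
        have hlne : l ≠ 0 := by
          rintro rfl
          obtain ⟨q, hq⟩ := hGne
          simpa using hl q hq
        have hlpos : 0 < ‖l‖ := norm_pos_iff.mpr hlne
        -- (b1) uniform bound on the tube image
        have hb1 : ∀ q ∈ fL, l q ≤ l y - ε₀ * ‖l‖ := by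
          intro q hq
          by_contra hcon
          push_neg at hcon
          have hltnorm : (l y - l q)/ε₀ < ‖l‖ := by
            rw [div_lt_iff₀ hε₀]; nlinarith
          obtain ⟨v, hv1, hv2⟩ := l.exists_lt_apply_of_lt_opNorm hltnorm
          have hvval : (l y - l q) < ε₀ * |l v| := by
            have := (div_lt_iff₀ hε₀).mp (lt_of_le_of_lt (le_refl _) hv2)
            calc l y - l q = ((l y - l q)/ε₀) * ε₀ := by field_simp
              _ < ‖l v‖ * ε₀ := by
                  apply mul_lt_mul_of_pos_right hv2 hε₀
              _ = ε₀ * |l v| := by rw [Real.norm_eq_abs]; ring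
          set v' : Fin n → ℂ := if 0 ≤ l v then (ε₀ : ℝ) • v else -((ε₀ : ℝ) • v) with hv'def
          have hv'norm : ‖v'‖ < ε₀ := by
            have h1 : ‖(ε₀:ℝ) • v‖ < ε₀ := by
              rw [norm_smul, Real.norm_eq_abs, _root_.abs_of_pos hε₀]
              nlinarith
            rw [hv'def]
            split_ifs with h
            · exact h1
            · rwa [norm_neg]
          have hv'val : (l y - l q) < l v' := by
            rw [hv'def]
            split_ifs with h
            · rw [map_smul, smul_eq_mul]
              calc l y - l q < ε₀ * |l v| := hvval
                _ = ε₀ * l v := by rw [_root_.abs_of_nonneg h]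
            · rw [map_neg, map_smul, smul_eq_mul]
              push_neg at h
              calc l y - l q < ε₀ * |l v| := hvval
                _ = -(ε₀ * l v) := by rw [abs_of_neg h]; ring
          have hqv' : q + v' ∈ G := by
            by_contra hout
            have h2 := hfLdist q hq (q + v') hout
            rw [dist_eq_norm, show q - (q + v') = -v' by ring, norm_neg] at h2
            linarith
          have h3 := hl _ hqv'
          rw [map_add] at h3
          linarith
        -- (b2) maximum principle
        set Lc : (Fin n → ℂ) →L[ℂ] ℂ := ContinuousLinearMap.extendTo𝕜' l with hLcdef
        have hre : ∀ q, (Lc q).re = l q := by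
          intro q
          rw [hLcdef, ContinuousLinearMap.extendTo𝕜', StrongDual.extendRCLike_apply]
          simp
        have hHdc : DiffContOnCl ℂ (fun lam => Complex.exp (Lc (f (θ • W lam)))) (ball 0 ρ) := by
          apply DifferentiableOn.diffContOnCl
          rw [closure_ball _ hρ0.ne']
          exact Complex.differentiable_exp.comp_differentiableOn
            (Lc.differentiable.comp_differentiableOn hFdiff)
        have hb2 : l (f (θ • W lam)) ≤ l y - ε₀ * ‖l‖ := by
          have hHb : ‖Complex.exp (Lc (f (θ • W lam)))‖ ≤ Real.exp (l y - ε₀ * ‖l‖) := by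
            apply Complex.norm_le_of_forall_mem_frontier_norm_le isBounded_ball hHdc
            · intro w hw
              rw [frontier_ball _ hρ0.ne'] at hw
              rw [Complex.norm_exp, Real.exp_le_exp, hre]
              exact hb1 _ (hFsphere w hw)
            · rwa [closure_ball _ hρ0.ne']
          rwa [Complex.norm_exp, Real.exp_le_exp, hre] at hHb
        have h4 : l (y - f (θ • W lam)) ≤ ‖l‖ * ‖y - f (θ • W lam)‖ := by
          calc l (y - f (θ • W lam)) ≤ |l (y - f (θ • W lam))| := le_abs_self _
            _ = ‖l (y - f (θ • W lam))‖ := (Real.norm_eq_abs _).symm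
            _ ≤ ‖l‖ * ‖y - f (θ • W lam)‖ := l.le_opNorm _
        have h5 : ε₀ * ‖l‖ ≤ l (y - f (θ • W lam)) := by
          rw [map_sub]; linarith
        have h6 : ε₀ ≤ ‖y - f (θ • W lam)‖ := by
          have h7 := le_trans h5 h4
          have h8 : ‖l‖ * ε₀ ≤ ‖l‖ * ‖y - f (θ • W lam)‖ := by nlinarith
          exact (mul_le_mul_iff_right₀ hlpos).mp h8
        rw [dist_eq_norm, ← norm_sub_rev]
        exact h6
      intro lam hlam
      exact ⟨mem_closedBall_zero_iff.mpr (ha lam hlam), fun y hy => hb lam hlam y hy⟩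
    -- trap the discs
    have trap : ∀ θ ∈ T', ∀ lam ∈ closedBall (0:ℂ) ρ, θ • W lam ∈ Q := by
      intro θ hθ lam hlam
      have hmem : θ • W lam ∈ Dk M := hθ.2.2 lam hlam
      rw [← hgf _ hmem]
      exact mem_image_of_mem g (deep θ hθ lam hlam)
    -- sup argument inside T'
    have hT'ne : T'.Nonempty := ⟨θ₀, hθ₀T'⟩
    have hT'bdd : BddAbove T' := ⟨θs, fun θ h => h.2.1⟩
    set S' := sSup T' with hS'def
    have hS'le : S' ≤ θs := csSup_le hT'ne fun θ h => h.2.1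
    have hS'ge : θ₀ ≤ S' := le_csSup hT'bdd hθ₀T'
    have hS'T' : S' ∈ T' := by
      refine ⟨hS'ge, hS'le, fun lam hlam => ?_⟩
      have hcl : S' ∈ closure T' := csSup_mem_closure hT'ne hT'bdd
      have hcont : Continuous (fun θ : ℝ => θ • W lam) := continuous_id.smul continuous_const
      have himg : (fun θ : ℝ => θ • W lam) '' T' ⊆ Q := by
        rintro _ ⟨θ, hθ, rfl⟩; exact trap θ hθ lam hlam
      have hmem2 : S' • W lam ∈ closure ((fun θ : ℝ => θ • W lam) '' T') :=
        image_closure_subset_closure_image hcont ⟨S', hcl, rfl⟩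
      have : S' • W lam ∈ Q := by
        rw [← hQc.isClosed.closure_eq]
        exact closure_mono himg hmem2
      exact hQM this
    have hS'eq : S' = θs := by
      by_contra hne'
      have hS'lt : S' < θs := lt_of_le_of_ne hS'le hne'
      obtain ⟨η, hη, hstep⟩ := step_open hρ0 hWc (hDkopen M) hS'T'.2.2
      have hmm : min (S' + η/2) θs ∈ T' := by
        refine ⟨le_trans hS'ge (le_min (by linarith) hS'le), min_le_right _ _, hstep _ ?_⟩
        rw [abs_lt]
        constructor
        · have : S' ≤ min (S' + η/2) θs := le_min (by linarith) hS'le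
          linarith
        · have : min (S' + η/2) θs ≤ S' + η/2 := min_le_left _ _
          linarith
      have hc1 : min (S' + η/2) θs ≤ S' := le_csSup hT'bdd hmm
      have hc2 : S' < min (S' + η/2) θs := lt_min (by linarith) hS'lt
      linarith
    refine ⟨hθsI, fun lam hlam => hDkD ?_⟩
    rw [← hS'eq]
    exact hS'T'.2.2 lam hlam

  -- sup argument
  have hTbdd : BddAbove T := ⟨1, fun θ h => h.1.2⟩
  have hTne : T.Nonempty := ⟨0, h0T⟩
  set S := sSup T with hSdef
  have hSpos : 0 < S := by
    obtain ⟨η, hη, hstep⟩ := step_open hρ0 hWc hopen h0T.2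
    have hmem : min (η/2) 1 ∈ T := by
      refine ⟨⟨by positivity, min_le_right _ _⟩, hstep _ ?_⟩
      rw [sub_zero, abs_of_pos (by positivity)]
      calc min (η/2) 1 ≤ η/2 := min_le_left _ _
        _ < η := by linarith
    calc (0:ℝ) < min (η/2) 1 := by positivity
      _ ≤ S := le_csSup hTbdd hmem
  have hS1 : S ≤ 1 := csSup_le hTne fun θ h => h.1.2
  have hSmem : S ∈ T := by
    apply key S ⟨hSpos.le, hS1⟩ hSpos
    intro θ h0θ hθS
    obtain ⟨θ'', hθ''T, hθθ''⟩ := exists_lt_of_lt_csSup hTne hθS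
    exact hdown θ'' hθ''T θ h0θ hθθ''.le
  have hSeq : S = 1 := by
    by_contra hne'
    have hlt : S < 1 := lt_of_le_of_ne hS1 hne'
    obtain ⟨η, hη, hstep⟩ := step_open hρ0 hWc hopen hSmem.2
    have hmem : min (S + η/2) 1 ∈ T := by
      refine ⟨⟨by positivity, min_le_right _ _⟩, hstep _ ?_⟩
      rw [abs_lt]
      constructor
      · have : S ≤ min (S + η/2) 1 := le_min (by linarith) hlt.le
        linarith
      · have : min (S + η/2) 1 ≤ S + η/2 := min_le_left _ _
        linarith
    have h1 : min (S + η/2) 1 ≤ S := le_csSup hTbdd hmem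
    have h2 : S < min (S + η/2) 1 := lt_min (by linarith) hlt
    linarith
  have := hSmem.2 0 (mem_closedBall_self hρ0.le)
  rw [hSeq, one_smul] at this
  exact this

end Stmt11Aux

theorem stmt_11 {n : ℕ} (D : Set (Fin n → ℂ))
    (hopen : IsOpen D) (hconn : IsConnected D) (hbdd : Bornology.IsBounded D)
    (hbal : ∀ z ∈ D, ∀ lam : ℂ, ‖lam‖ ≤ 1 → lam • z ∈ D)
    (Dk : ℕ → Set (Fin n → ℂ))
    (hmono : ∀ m, Dk m ⊆ Dk (m + 1))
    (hDkopen : ∀ m, IsOpen (Dk m))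
    (hunion : ⋃ m, Dk m = D)
    (hbiho : ∀ m, ∃ G : Set (Fin n → ℂ), IsOpen G ∧ Convex ℝ G ∧ Biholomorphic (Dk m) G) :
    Convex ℝ D := by
  rcases Nat.eq_zero_or_pos n with hn0 | hnpos
  · subst hn0
    intro x hx y hy a b ha hb hab
    have : a • x + b • y = x := Subsingleton.elim _ _
    rwa [this]
  have hn : n ≠ 0 := hnpos.ne'
  intro x hx y hy a b ha hb hab
  have h0D : (0 : Fin n → ℂ) ∈ D := by
    have := hbal x hx 0 (by simp)
    simpa using this
  have hmono' : Monotone Dk := monotone_nat_of_le_succ hmono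
  -- find t > 1 with t•x, t•y ∈ D
  have hcont : ∀ v : Fin n → ℂ, Continuous fun r : ℝ => (r:ℂ) • v := fun v =>
    Complex.continuous_ofReal.smul continuous_const
  have hUo : IsOpen ({r : ℝ | (r:ℂ) • x ∈ D} ∩ {r : ℝ | (r:ℂ) • y ∈ D}) :=
    (hopen.preimage (hcont x)).inter (hopen.preimage (hcont y))
  have h1U : (1:ℝ) ∈ {r : ℝ | (r:ℂ) • x ∈ D} ∩ {r : ℝ | (r:ℂ) • y ∈ D} := by
    constructor <;> · show _ • _ ∈ D; norm_num; assumption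
  obtain ⟨ε, hε, hball⟩ := Metric.isOpen_iff.mp hUo 1 h1U
  set t : ℝ := 1 + min ε 1 / 2 with htdef
  have ht1 : 1 < t := by
    have : 0 < min ε 1 := lt_min hε one_pos
    rw [htdef]; linarith
  have htmem : (t:ℂ) • x ∈ D ∧ (t:ℂ) • y ∈ D := by
    have : t ∈ ball (1:ℝ) ε := by
      rw [mem_ball, dist_eq_norm, Real.norm_eq_abs, htdef]
      have h1 : min ε 1 ≤ ε := min_le_left _ _
      have h2 : 0 < min ε 1 := lt_min hε one_pos
      rw [show 1 + min ε 1 / 2 - 1 = min ε 1 / 2 by ring, _root_.abs_of_pos (by linarith)]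
      linarith
    exact hball this
  have htpos : (0:ℝ) < t := by linarith
  have htne : (t:ℂ) ≠ 0 := by
    simp only [ne_eq, Complex.ofReal_eq_zero]
    linarith
  clear htdef
  clear_value t
  have hdiscx : ∀ lam : ℂ, ‖lam‖ ≤ t → lam • x ∈ D := by
    intro lam hlam
    have h1 := hbal _ htmem.1 (lam / t) (by
      rw [norm_div, Complex.norm_real, Real.norm_eq_abs, _root_.abs_of_pos htpos]
      rw [div_le_one htpos]
      exact hlam)
    rwa [smul_smul, div_mul_cancel₀ _ htne] at h1
  have hdiscy : ∀ lam : ℂ, ‖lam‖ ≤ t → lam • y ∈ D := by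
    intro lam hlam
    have h1 := hbal _ htmem.2 (lam / t) (by
      rw [norm_div, Complex.norm_real, Real.norm_eq_abs, _root_.abs_of_pos htpos]
      rw [div_le_one htpos]
      exact hlam)
    rwa [smul_smul, div_mul_cancel₀ _ htne] at h1
  -- compact K inside some Dk N
  set K : Set (Fin n → ℂ) := (fun lam : ℂ => lam • x) '' closedBall 0 t ∪
      (fun lam : ℂ => lam • y) '' closedBall 0 t with hKdef
  have hKc : IsCompact K := by
    apply IsCompact.union
    · exact (isCompact_closedBall _ _).image (continuous_id.smul continuous_const)
    · exact (isCompact_closedBall _ _).image (continuous_id.smul continuous_const)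
  have hKD : K ⊆ D := by
    rintro _ (⟨lam, hlam, rfl⟩ | ⟨lam, hlam, rfl⟩)
    · exact hdiscx lam (mem_closedBall_zero_iff.mp hlam)
    · exact hdiscy lam (mem_closedBall_zero_iff.mp hlam)
  obtain ⟨N, hN⟩ := Stmt11Aux.compact_subset_union hKc Dk hmono' hDkopen (by rw [hunion]; exact hKD)
  obtain ⟨G, hGopen, hGconv, f, g, hf, hg, hfm, hgm, hgf, hfg⟩ := hbiho N
  have hmemx : ∀ lam : ℂ, ‖lam‖ ≤ t → lam • x ∈ Dk N := fun lam h =>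
    hN (Or.inl ⟨lam, mem_closedBall_zero_iff.mpr h, rfl⟩)
  have hmemy : ∀ lam : ℂ, ‖lam‖ ≤ t → lam • y ∈ Dk N := fun lam h =>
    hN (Or.inr ⟨lam, mem_closedBall_zero_iff.mpr h, rfl⟩)
  set φ : ℂ → Fin n → ℂ := fun lam => g (a • f (lam • x) + b • f (lam • y)) with hφdef
  have hcombo : ∀ lam : ℂ, ‖lam‖ ≤ t → a • f (lam • x) + b • f (lam • y) ∈ G := fun lam h =>
    hGconv (hfm (hmemx _ h)) (hfm (hmemy _ h)) ha hb hab
  have hφmem : ∀ lam : ℂ, ‖lam‖ ≤ t → φ lam ∈ Dk N := fun lam h => hgm (hcombo lam h)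
  have hinnerdiff : DifferentiableOn ℂ
      (fun lam : ℂ => a • f (lam • x) + b • f (lam • y)) (ball 0 t) := by
    apply DifferentiableOn.add
    · apply DifferentiableOn.fun_const_smul
      apply DifferentiableOn.comp hf ((differentiable_id.smul_const x).differentiableOn)
      intro lam hlam
      exact hmemx lam (le_of_lt (mem_ball_zero_iff.mp hlam))
    · apply DifferentiableOn.fun_const_smul
      apply DifferentiableOn.comp hf ((differentiable_id.smul_const y).differentiableOn)
      intro lam hlam
      exact hmemy lam (le_of_lt (mem_ball_zero_iff.mp hlam))
  have hφdiff : DifferentiableOn ℂ φ (ball 0 t) := by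
    apply DifferentiableOn.comp hg hinnerdiff
    intro lam hlam
    exact hcombo lam (le_of_lt (mem_ball_zero_iff.mp hlam))
  have h0N : (0 : Fin n → ℂ) ∈ Dk N := by
    have := hmemx 0 (by simp; linarith)
    rwa [zero_smul] at this
  have hφ0 : φ 0 = 0 := by
    rw [hφdef]
    show g (a • f ((0:ℂ) • x) + b • f ((0:ℂ) • y)) = 0
    rw [zero_smul, zero_smul, Convex.combo_self hab, hgf 0 h0N]
  -- derivative of φ at 0 equals a•x+b•y
  have hfat : DifferentiableAt ℂ f 0 := hf.differentiableAt ((hDkopen N).mem_nhds h0N)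
  set A := fderiv ℂ f (0 : Fin n → ℂ) with hAdef
  have hfA : HasFDerivAt f A 0 := hfat.hasFDerivAt
  have hgat : DifferentiableAt ℂ g (f 0) := hg.differentiableAt (hGopen.mem_nhds (hfm h0N))
  set B := fderiv ℂ g (f 0) with hBdef
  have hgB : HasFDerivAt g B (f 0) := hgat.hasFDerivAt
  have hid : ∀ v, B (A v) = v := by
    have hcomp : HasFDerivAt (g ∘ f) (B.comp A) 0 := hgB.comp 0 hfA
    have heq : (g ∘ f) =ᶠ[nhds (0 : Fin n → ℂ)] id := by
      filter_upwards [(hDkopen N).mem_nhds h0N] with v hv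
      exact hgf v hv
    have hcomp' : HasFDerivAt (id : (Fin n → ℂ) → (Fin n → ℂ)) (B.comp A) 0 :=
      hcomp.congr_of_eventuallyEq heq.symm
    have huniq := hcomp'.unique (hasFDerivAt_id 0)
    intro v
    have := congrArg (fun (T : (Fin n → ℂ) →L[ℂ] (Fin n → ℂ)) => T v) huniq
    simpa using this
  have hd1 : HasDerivAt (fun lam : ℂ => lam • x) x 0 := by
    simpa using (hasDerivAt_id (0:ℂ)).smul_const x
  have hd2 : HasDerivAt (fun lam : ℂ => lam • y) y 0 := by
    simpa using (hasDerivAt_id (0:ℂ)).smul_const y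
  have hfA' : HasFDerivAt f A ((fun lam : ℂ => lam • x) 0) := by
    rw [show (fun lam : ℂ => lam • x) 0 = 0 by simp]
    exact hfA
  have hfA'' : HasFDerivAt f A ((fun lam : ℂ => lam • y) 0) := by
    rw [show (fun lam : ℂ => lam • y) 0 = 0 by simp]
    exact hfA
  have hfx : HasDerivAt (fun lam : ℂ => f (lam • x)) (A x) 0 := hfA'.comp_hasDerivAt 0 hd1
  have hfy : HasDerivAt (fun lam : ℂ => f (lam • y)) (A y) 0 := hfA''.comp_hasDerivAt 0 hd2
  have hsum : HasDerivAt (fun lam : ℂ => a • f (lam • x) + b • f (lam • y))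
      (a • A x + b • A y) 0 := (hfx.const_smul a).add (hfy.const_smul b)
  have hgB' : HasFDerivAt g B ((fun lam : ℂ => a • f (lam • x) + b • f (lam • y)) 0) := by
    rw [show (fun lam : ℂ => a • f (lam • x) + b • f (lam • y)) 0 = f 0 by
      simp only [zero_smul]; rw [Convex.combo_self hab]]
    exact hgB
  have hφ' : HasDerivAt φ (B (a • A x + b • A y)) 0 := hgB'.comp_hasDerivAt 0 hsum
  have hval : B (a • A x + b • A y) = a • x + b • y := by
    rw [map_add, B.map_smul_of_tower, B.map_smul_of_tower, hid, hid]
  -- the quotient disc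
  set W : ℂ → Fin n → ℂ := dslope φ 0 with hWdef
  have hWdiff : DifferentiableOn ℂ W (ball 0 t) :=
    (Complex.differentiableOn_dslope (ball_mem_nhds 0 (by linarith))).mpr hφdiff
  have hW0 : W 0 = a • x + b • y := by
    rw [hWdef, dslope_same, hφ'.deriv, hval]
  set ρ : ℝ := (1 + t)/2 with hρdef
  have hρ1 : 1 < ρ := by rw [hρdef]; linarith [ht1]
  have hρt : ρ < t := by rw [hρdef]; linarith [ht1]
  have hbound : ∀ θ : ℝ, θ ∈ Set.Icc (0:ℝ) 1 → ∀ lam : ℂ, ‖lam‖ = ρ → θ • W lam ∈ D := by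
    intro θ hθ lam hlam
    have hlamne : lam ≠ 0 := by
      intro h
      rw [h] at hlam
      simp at hlam
      linarith
    have hWlam : W lam = lam⁻¹ • φ lam := by
      rw [hWdef, dslope_of_ne _ hlamne, slope_def_module, hφ0, sub_zero, sub_zero]
    have hφlamD : φ lam ∈ D := by
      rw [← hunion]
      exact Set.subset_iUnion Dk N (hφmem lam (by rw [hlam]; linarith))
    rw [hWlam, Stmt11Aux.rsmul θ, smul_smul]
    apply hbal _ hφlamD
    rw [norm_mul, norm_inv, Complex.norm_real, Real.norm_eq_abs]
    rw [hlam]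
    rw [_root_.abs_of_nonneg hθ.1]
    calc θ * ρ⁻¹ ≤ 1 * ρ⁻¹ := by
          apply mul_le_mul_of_nonneg_right hθ.2
          positivity
      _ ≤ 1 := by
          rw [one_mul]
          rw [inv_le_one_iff₀]
          right; linarith
  have hfinal := Stmt11Aux.fill hn D hopen hbdd hbal Dk hmono' hDkopen hunion hbiho
    hρ1 hρt hWdiff h0D hbound
  rwa [hW0] at hfinal
end
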